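/- The group 𝒯 of tadpole matrices in M_{2p}(ℂ) is not finite modulo its centre, i.e., the quotient 𝒯/Z(𝒯) is infinite. -/

import Mathlib

open Matrix

/-- The `p × p` cyclic permutation matrix. -/
def cycleMatrix (p : ℕ) : Matrix (Fin p) (Fin p) ℂ :=
  Matrix.of fun i j => if (j : ℕ) = ((i : ℕ) + 1) % p then 1 else 0

/-- The fixed primitive `p²`-th root of unity `ξ = e^{2πi/p²}`. -/
noncomputable def xi (p : ℕ) : ℂ := Complex.exp (2 * Real.pi * Complex.I / (p ^ 2))

/-- The tadpole matrix with head `D C^k` (where `D = diagonal d`) and tail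
`diag(ξ^{0·k + a_0 p}, ξ^{1·k + a_1 p}, …, ξ^{(p-1)k + a_{p-1} p})`.
We index the `2p × 2p` matrix by `Fin p ⊕ Fin p`. -/
noncomputable def tadpole (p : ℕ) (d : Fin p → ℂ) (k : ℕ) (a : Fin p → ℕ) :
    Matrix (Fin p ⊕ Fin p) (Fin p ⊕ Fin p) ℂ :=
  Matrix.fromBlocks (Matrix.diagonal d * cycleMatrix p ^ k) 0 0
    (Matrix.diagonal fun j : Fin p => xi p ^ ((j : ℕ) * k + a j * p))

/-- Membership in the set `𝒯` of tadpole matrices: `D` is unitary diagonal of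
determinant one, `k ∈ {0, …, p-1}`, `a_j ∈ {0, …, p-1}` and `a_0 = 0` (so the first
tail entry is `1`). -/
def IsTadpole (p : ℕ) (A : Matrix (Fin p ⊕ Fin p) (Fin p ⊕ Fin p) ℂ) : Prop :=
  ∃ (d : Fin p → ℂ) (k : ℕ) (a : Fin p → ℕ),
    (∀ i, ‖d i‖ = 1) ∧ (∏ i, d i = 1) ∧ k < p ∧ (∀ j, a j < p) ∧
    (∀ j : Fin p, (j : ℕ) = 0 → a j = 0) ∧ A = tadpole p d k a

/-!
A central tadpole matrix commutes with the tadpole whose head is `diag(i, -i, 1, …, 1)`, which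
forces its head to have no cyclic part, and with the one whose head is the cycle matrix, which
forces its diagonal head to be scalar; determinant one makes that scalar a `p`-th root of unity.
So multiplying by central elements moves the `(0, 0)` entry of a tadpole matrix only within
finitely many values, whereas the tadpoles with head `diag(t, t⁻¹, 1, …, 1)`, `‖t‖ = 1`, realise
every point of the unit circle there.
-/

section CycleMatrix

open Fin.NatCast

variable {p : ℕ} [NeZero p]

theorem cycleMatrix_apply (i j : Fin p) : cycleMatrix p i j = if j = i + 1 then 1 else 0 := by
  simp only [cycleMatrix, of_apply, Fin.ext_iff, Fin.val_add, Fin.val_one', Nat.add_mod_mod]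

theorem mul_cycleMatrix_apply (M : Matrix (Fin p) (Fin p) ℂ) (i j : Fin p) :
    (M * cycleMatrix p) i j = M i (j - 1) := by
  simp only [mul_apply, cycleMatrix_apply, mul_ite, mul_one, mul_zero, ← sub_eq_iff_eq_add,
    eq_comm (a := j - 1), Finset.sum_ite_eq', Finset.mem_univ, if_true]

theorem cycleMatrix_pow_apply (k : ℕ) (i j : Fin p) :
    (cycleMatrix p ^ k) i j = if j = i + (k : Fin p) then 1 else 0 := by
  induction k generalizing j with
  | zero => simp [one_apply, eq_comm]
  | succ k ih =>
    rw [pow_succ, mul_cycleMatrix_apply, ih, Nat.cast_succ, ← add_assoc]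
    simp only [sub_eq_iff_eq_add]

theorem cycleMatrix_pow_eq_one {k : ℕ} (hk : (k : Fin p) = 0) : cycleMatrix p ^ k = 1 := by
  ext i j
  simp [cycleMatrix_pow_apply, hk, one_apply, eq_comm]

theorem diagonal_mul_cycleMatrix_pow_apply (d : Fin p → ℂ) (k : ℕ) (i j : Fin p) :
    (diagonal d * cycleMatrix p ^ k) i j = if j = i + (k : Fin p) then d i else 0 := by
  rw [diagonal_mul, cycleMatrix_pow_apply, mul_ite, mul_one, mul_zero]

theorem apply_add_eq_of_commute_diagonal {d w : Fin p → ℂ} (hd : ∀ i, d i ≠ 0) {k : ℕ}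
    (h : Commute (diagonal d * cycleMatrix p ^ k) (diagonal w)) (i : Fin p) :
    w (i + (k : Fin p)) = w i := by
  have hentry := congrFun (congrFun h.eq i) (i + (k : Fin p))
  rw [mul_diagonal, diagonal_mul w, diagonal_mul_cycleMatrix_pow_apply, if_pos rfl] at hentry
  exact mul_left_cancel₀ (hd i) (hentry.trans (mul_comm _ _))

end CycleMatrix

open Fin.NatCast in
theorem Fin.apply_eq_apply_zero_of_apply_add_one {α : Type*} {p : ℕ} [NeZero p] {f : Fin p → α}
    (h : ∀ i, f (i + 1) = f i) (i : Fin p) : f i = f 0 := by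
  suffices ∀ n : ℕ, f (n : Fin p) = f 0 by simpa using this i
  intro n
  induction n with
  | zero => rw [Nat.cast_zero]
  | succ n ih => rw [Nat.cast_succ, h, ih]

theorem Matrix.commute_of_commute_fromBlocks {m n R : Type*} [Fintype m] [Fintype n]
    [NonUnitalNonAssocSemiring R] {A A' : Matrix n n R} {D D' : Matrix m m R}
    (h : Commute (fromBlocks A 0 0 D) (fromBlocks A' 0 0 D')) : Commute A A' := by
  have h' := h.eq
  simp only [fromBlocks_multiply, Matrix.mul_zero, Matrix.zero_mul, add_zero, zero_add,
    fromBlocks_inj] at h'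
  exact h'.1

noncomputable def pairDiag (p : ℕ) [NeZero p] (t : ℂ) : Fin p → ℂ :=
  Pi.mulSingle 0 t * Pi.mulSingle 1 t⁻¹

section Tadpole

open Fin.NatCast

variable {p : ℕ} [NeZero p]

theorem pairDiag_zero (hp : 1 < p) (t : ℂ) : pairDiag p t 0 = t := by
  have : (0 : Fin p) ≠ 1 := by simp [Fin.ext_iff, Nat.mod_eq_of_lt hp]
  simp [pairDiag, this]

theorem isTadpole_pairDiag {t : ℂ} (ht : ‖t‖ = 1) :
    IsTadpole p (tadpole p (pairDiag p t) 0 0) := by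
  have ht0 : t ≠ 0 := norm_ne_zero_iff.mp (by rw [ht]; exact one_ne_zero)
  refine ⟨_, 0, 0, fun i => ?_, ?_, Nat.pos_of_neZero p, fun _ => Nat.pos_of_neZero p,
    fun _ _ => rfl, rfl⟩
  · simp only [pairDiag, Pi.mul_apply, Pi.mulSingle_apply]
    split_ifs <;> simp [ht]
  · simp [pairDiag, Finset.prod_mul_distrib, Finset.prod_pi_mulSingle', ht0]

theorem isTadpole_cycleMatrix (hp : 1 < p) : IsTadpole p (tadpole p 1 1 0) :=
  ⟨1, 1, 0, fun _ => norm_one, Finset.prod_const_one, hp, fun _ => Nat.pos_of_neZero p,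
    fun _ _ => rfl, rfl⟩

theorem natCast_eq_zero_of_commute_pairDiag (hp : 1 < p) {e : Fin p → ℂ} (he : ∀ i, e i ≠ 0)
    {k : ℕ} (h : Commute (diagonal e * cycleMatrix p ^ k) (diagonal (pairDiag p Complex.I))) :
    (k : Fin p) = 0 := by
  have hk := apply_add_eq_of_commute_diagonal he h 0
  rw [zero_add, pairDiag_zero hp] at hk
  by_contra hk0
  simp only [pairDiag, Pi.mul_apply, Pi.mulSingle_apply, if_neg hk0] at hk
  split_ifs at hk <;> norm_num [Complex.ext_iff] at hk

theorem IsTadpole.exists_pow_eq_one_of_central (hp : 1 < p)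
    {Z : Matrix (Fin p ⊕ Fin p) (Fin p ⊕ Fin p) ℂ} (hZ : IsTadpole p Z)
    (hcentral : ∀ W, IsTadpole p W → Z * W = W * Z) :
    ∃ c : ℂ, c ^ p = 1 ∧ ∀ B : Matrix (Fin p ⊕ Fin p) (Fin p ⊕ Fin p) ℂ,
      (B * Z) (.inl 0) (.inl 0) = B (.inl 0) (.inl 0) * c := by
  obtain ⟨e, k, a, he, hprod, -, -, -, rfl⟩ := hZ
  have he0 : ∀ i, e i ≠ 0 := fun i h => by simpa [h] using he i
  have hk : (k : Fin p) = 0 := by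
    refine natCast_eq_zero_of_commute_pairDiag hp he0 ?_
    simpa using commute_of_commute_fromBlocks
      (hcentral _ (isTadpole_pairDiag (t := Complex.I) (by simp)))
  have hconst : ∀ i, e i = e 0 := by
    refine Fin.apply_eq_apply_zero_of_apply_add_one fun i => ?_
    have h := commute_of_commute_fromBlocks (hcentral _ (isTadpole_cycleMatrix hp))
    rw [cycleMatrix_pow_eq_one hk, Matrix.mul_one] at h
    simpa using apply_add_eq_of_commute_diagonal (fun _ => one_ne_zero) h.symm i
  refine ⟨e 0, ?_, fun B => ?_⟩
  · rw [← hprod, Finset.prod_congr rfl fun i _ => hconst i, Finset.prod_const, Finset.card_fin]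
  · simp [tadpole, mul_apply, cycleMatrix_pow_eq_one hk, diagonal_apply]

end Tadpole

theorem tadpole_group_not_finite_mod_center_general (p : ℕ) (hp : p.Prime) :
    ¬ ∃ F : Finset (Matrix (Fin p ⊕ Fin p) (Fin p ⊕ Fin p) ℂ),
        (∀ B ∈ F, IsTadpole p B) ∧
        ∀ A, IsTadpole p A → ∃ B ∈ F, ∃ Z,
          IsTadpole p Z ∧ (∀ W, IsTadpole p W → Z * W = W * Z) ∧ A = B * Z := by
  rintro ⟨F, -, hcover⟩
  have : NeZero p := ⟨hp.ne_zero⟩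
  have hsphere : (Metric.sphere (0 : ℂ) 1).Infinite :=
    (isPreconnected_sphere (by simp [Complex.rank_real_complex]) 0 1).infinite_of_nontrivial
      ⟨1, by simp, -1, by simp, by norm_num⟩
  refine hsphere <| Set.Finite.subset (((F.image fun B => B (.inl 0) (.inl 0)) ×ˢ
    Polynomial.nthRootsFinset p (1 : ℂ)).image fun q : ℂ × ℂ => q.1 * q.2).finite_toSet ?_
  intro t ht
  obtain ⟨B, hB, Z, hZ, hcentral, hA⟩ :=
    hcover _ (isTadpole_pairDiag (mem_sphere_zero_iff_norm.mp ht))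
  obtain ⟨c, hc, hBZ⟩ := hZ.exists_pow_eq_one_of_central hp.one_lt hcentral
  have htc : t = B (.inl 0) (.inl 0) * c := by
    rw [← hBZ, ← hA]
    simp [tadpole, pairDiag_zero hp.one_lt]
  simp only [Finset.coe_image, Finset.coe_product, Set.mem_image, Set.mem_prod, Finset.mem_coe,
    Polynomial.mem_nthRootsFinset hp.pos]
  exact ⟨(_, c), ⟨⟨B, hB, rfl⟩, hc⟩, htc.symm⟩

/-- The group `𝒯` of tadpole matrices is not finite modulo its centre: there is no
finite set `F` of tadpole matrices such that every tadpole matrix is of the form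
`B * Z` with `B ∈ F` and `Z` in the centre of `𝒯` (i.e. `𝒯/Z(𝒯)` has infinitely
many cosets). -/
theorem tadpole_group_not_finite_mod_center (p : ℕ) (hp : p.Prime) (hodd : Odd p) :
    ¬ ∃ F : Finset (Matrix (Fin p ⊕ Fin p) (Fin p ⊕ Fin p) ℂ),
        (∀ B ∈ F, IsTadpole p B) ∧
        ∀ A, IsTadpole p A → ∃ B ∈ F, ∃ Z,
          IsTadpole p Z ∧ (∀ W, IsTadpole p W → Z * W = W * Z) ∧ A = B * Z :=
  tadpole_group_not_finite_mod_center_general p hp
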